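/- There exists a constant C > 0 such that for every finite set P of points in the unit square [0,1]² ⊆ ℝ² (with the Euclidean distance) and every depot o ∈ [0,1]², the optimal tour cost satisfies T(o, P) ≤ C·(√|P| + 1). By rescaling, the optimal tour through n points in a square of area A from a depot in that square has length at most C·(√(nA) + √A), which is the √(nA) scaling underlying the Beardwood–Halton–Hammersley routing-cost estimate. -/

import Mathlib

/-!
Cut the square into `k = ⌊√n⌋ + 1` horizontal strips of height `1/k` and visit the points strip
by strip, from left to right inside each strip. A step inside a strip costs at most its horizontal
advance plus `1/k`, and a step to a later strip costs at most the diameter `2`. Both are dominated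
by the increase of the potential `x + 3·(strip index)` plus `1/k`, so the walk telescopes to at most
`1 + 3k + n/k = O(√n)`; the two legs to and from the depot add `4`.
-/

noncomputable section

/-- Length of a walk through a list of points in a metric space. -/
def walkLen {X : Type*} [MetricSpace X] : List X → ℝ
  | [] => 0
  | [_] => 0
  | a :: b :: rest => dist a b + walkLen (b :: rest)

/-- Closed-walk length `L(o; q₁, …, q_m)`: leave the depot `o`, visit the points
in order, and return to `o`.  For the empty sequence this is `dist o o = 0`. -/
def closedWalkLen {X : Type*} [MetricSpace X] (o : X) (l : List X) : ℝ :=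
  walkLen (o :: l ++ [o])

/-- Optimal tour cost `T(o, P)`: the infimum of the closed-walk lengths over all
orderings (permutations) of the finite set `P`; `T(o, ∅) = 0`. -/
def optTourCost {X : Type*} [MetricSpace X] (o : X) (P : Finset X) : ℝ :=
  sInf (closedWalkLen o '' {l : List X | l.Perm P.toList})

section Walks

variable {X : Type*} [MetricSpace X]

theorem walkLen_nonneg : ∀ l : List X, 0 ≤ walkLen l
  | [] => le_rfl
  | [_] => le_rfl
  | _ :: b :: l => add_nonneg dist_nonneg (walkLen_nonneg (b :: l))

theorem optTourCost_le_closedWalkLen (o : X) {P : Finset X} {l : List X}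
    (hl : l.Perm P.toList) : optTourCost o P ≤ closedWalkLen o l :=
  csInf_le ⟨0, by rintro _ ⟨l, -, rfl⟩; exact walkLen_nonneg _⟩ ⟨l, hl, rfl⟩

theorem walkLen_cons_le {D : ℝ} (hD : 0 ≤ D) (x : X) :
    ∀ {l : List X}, (∀ y ∈ l, dist x y ≤ D) → walkLen (x :: l) ≤ D + walkLen l
  | [], _ => by simpa [walkLen] using hD
  | a :: _, h => add_le_add_left (h a List.mem_cons_self) _

theorem walkLen_append_singleton_le {D : ℝ} (o : X) :
    ∀ (x : X) (l : List X), (∀ y ∈ x :: l, dist y o ≤ D) →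
      walkLen (x :: l ++ [o]) ≤ walkLen (x :: l) + D
  | x, [], h => by simpa [walkLen] using h x List.mem_cons_self
  | x, a :: l, h => by
    have ih := walkLen_append_singleton_le o a l fun y hy => h y (List.mem_cons_of_mem _ hy)
    change dist x a + walkLen (a :: l ++ [o]) ≤ dist x a + walkLen (a :: l) + D
    linarith

theorem closedWalkLen_le_walkLen_add {D : ℝ} (hD : 0 ≤ D) (o : X) {l : List X}
    (h : ∀ y ∈ l, dist o y ≤ D) : closedWalkLen o l ≤ walkLen l + 2 * D := by
  have hback : ∀ y ∈ o :: l, dist y o ≤ D := by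
    simpa [dist_comm _ o, hD] using h
  calc closedWalkLen o l ≤ walkLen (o :: l) + D := walkLen_append_singleton_le o o l hback
    _ ≤ D + walkLen l + D := by gcongr; exact walkLen_cons_le hD o h
    _ = walkLen l + 2 * D := by ring

theorem walkLen_le_of_isChain (f : X → ℝ) {M ε : ℝ} :
    ∀ (x : X) (l : List X), (x :: l).IsChain (fun a b => dist a b ≤ f b - f a + ε) →
      (∀ y ∈ x :: l, f y ≤ M) → walkLen (x :: l) ≤ M - f x + l.length * ε
  | x, [], _, hM => by simpa [walkLen] using hM x List.mem_cons_self
  | x, a :: l, hc, hM => by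
    rw [List.isChain_cons_cons] at hc
    have ih := walkLen_le_of_isChain f a l hc.2 fun y hy => hM y (List.mem_cons_of_mem _ hy)
    change dist x a + walkLen (a :: l) ≤ _
    push_cast [List.length_cons]
    linarith [hc.1]

end Walks

theorem List.exists_perm_pairwise_le_comp {α β : Type*} [LinearOrder β] (key : α → β)
    (s : List α) : ∃ l : List α, l.Perm s ∧ l.Pairwise fun a b => key a ≤ key b :=
  ⟨s.mergeSort fun a b => key a ≤ key b, List.mergeSort_perm _ _,
    (List.pairwise_mergeSort
      (fun _ _ _ hab hbc => by simp only [decide_eq_true_eq] at *; exact hab.trans hbc)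
      (fun a b => by simpa using le_total (key a) (key b)) s).imp (by simp)⟩

local notation "ℝ²" => EuclideanSpace ℝ (Fin 2)

theorem EuclideanSpace.dist_le_abs_add_abs (p q : ℝ²) :
    dist p q ≤ |p 0 - q 0| + |p 1 - q 1| := by
  rw [EuclideanSpace.dist_eq, Fin.sum_univ_two, Real.dist_eq, Real.dist_eq,
    Real.sqrt_le_left (by positivity)]
  nlinarith [abs_nonneg (p 0 - q 0), abs_nonneg (p 1 - q 1), sq_abs (p 0 - q 0),
    sq_abs (p 1 - q 1)]

def unitSquare : Set ℝ² := {p | ∀ i, p i ∈ Set.Icc 0 1}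

theorem dist_le_two_of_mem_unitSquare {p q : ℝ²} (hp : p ∈ unitSquare) (hq : q ∈ unitSquare) :
    dist p q ≤ 2 := by
  have h0 : |p 0 - q 0| ≤ 1 := by
    simpa using abs_sub_le_of_le_of_le (hp 0).1 (hp 0).2 (hq 0).1 (hq 0).2
  have h1 : |p 1 - q 1| ≤ 1 := by
    simpa using abs_sub_le_of_le_of_le (hp 1).1 (hp 1).2 (hq 1).1 (hq 1).2
  linarith [EuclideanSpace.dist_le_abs_add_abs p q]

section Strips

variable (k : ℕ)

def stripIndex (p : ℝ²) : ℤ := ⌊(k : ℝ) * p 1⌋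

def stripKey (p : ℝ²) : ℤ ×ₗ ℝ := toLex (stripIndex k p, p 0)

/-- Moving up one strip raises the potential by at least `3 - 1 = 2`, which pays for any jump
inside the unit square. -/
def stripPotential (p : ℝ²) : ℝ := p 0 + 3 * stripIndex k p

variable {k}

theorem stripIndex_mem_Icc {p : ℝ²} (hp : p ∈ unitSquare) :
    (stripIndex k p : ℝ) ∈ Set.Icc 0 (k : ℝ) := by
  have hkp : (k : ℝ) * p 1 ≤ k := mul_le_of_le_one_right k.cast_nonneg (hp 1).2
  exact ⟨by exact_mod_cast Int.floor_nonneg.mpr (mul_nonneg k.cast_nonneg (hp 1).1),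
    (Int.floor_le _).trans hkp⟩

theorem stripPotential_mem_Icc {p : ℝ²} (hp : p ∈ unitSquare) :
    stripPotential k p ∈ Set.Icc 0 (1 + 3 * k : ℝ) := by
  have := stripIndex_mem_Icc (k := k) hp
  constructor <;> simp only [stripPotential] <;> linarith [(hp 0).1, (hp 0).2, this.1, this.2]

theorem abs_sub_lt_of_stripIndex_eq (hk : 0 < k) {p q : ℝ²}
    (h : stripIndex k p = stripIndex k q) : |p 1 - q 1| < 1 / k := by
  have hk' : (0 : ℝ) < k := by exact_mod_cast hk
  have := Int.abs_sub_lt_one_of_floor_eq_floor h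
  rwa [← mul_sub, abs_mul, abs_of_pos hk', ← lt_div_iff₀' hk'] at this

theorem dist_le_stripPotential_sub (hk : 0 < k) {p q : ℝ²} (hp : p ∈ unitSquare)
    (hq : q ∈ unitSquare) (hpq : stripKey k p ≤ stripKey k q) :
    dist p q ≤ stripPotential k q - stripPotential k p + 1 / k := by
  have hk' : (0 : ℝ) ≤ 1 / k := by positivity
  rcases Prod.Lex.toLex_le_toLex.mp hpq with hlt | ⟨heq, hle⟩
  · have hstrip : (stripIndex k p : ℝ) + 1 ≤ stripIndex k q := by exact_mod_cast hlt
    have := dist_le_two_of_mem_unitSquare hp hq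
    simp only [stripPotential]
    linarith [(hp 0).2, (hq 0).1]
  · simp only at heq hle
    have hy := (abs_sub_lt_of_stripIndex_eq hk heq).le
    have hx : |p 0 - q 0| = q 0 - p 0 := by rw [abs_sub_comm, abs_of_nonneg (by linarith)]
    simp only [stripPotential, heq]
    linarith [EuclideanSpace.dist_le_abs_add_abs p q]

theorem walkLen_le_of_pairwise_stripKey (hk : 0 < k) {l : List ℝ²}
    (hl : ∀ p ∈ l, p ∈ unitSquare) (hs : l.Pairwise fun p q => stripKey k p ≤ stripKey k q) :
    walkLen l ≤ 1 + 3 * k + l.length / k := by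
  rcases l with _ | ⟨x, t⟩
  · simp [walkLen]
    positivity
  have hchain : (x :: t).IsChain fun p q =>
      dist p q ≤ stripPotential k q - stripPotential k p + 1 / k :=
    (hs.imp_of_mem fun hp hq => dist_le_stripPotential_sub hk (hl _ hp) (hl _ hq)).isChain
  have hwalk := walkLen_le_of_isChain (stripPotential k) x t hchain
    fun y hy => (stripPotential_mem_Icc (hl y hy)).2
  have hx := (stripPotential_mem_Icc (k := k) (hl x List.mem_cons_self)).1
  have : (t.length : ℝ) * (1 / k) ≤ (x :: t).length / k := by
    rw [List.length_cons, mul_one_div]; gcongr; simp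
  linarith

end Strips

/-- BHH-type upper bound: there is a universal constant `C > 0` such that for
every finite set `P` of points in the unit square and every depot `o` in the
unit square, the optimal tour cost satisfies `T(o, P) ≤ C·(√|P| + 1)`. -/
theorem optTourCost_le_sqrt_card :
    ∃ C : ℝ, 0 < C ∧
      ∀ (o : EuclideanSpace ℝ (Fin 2)) (P : Finset (EuclideanSpace ℝ (Fin 2))),
        (∀ i, o i ∈ Set.Icc (0 : ℝ) 1) →
        (∀ p ∈ P, ∀ i, p i ∈ Set.Icc (0 : ℝ) 1) →
        optTourCost o P ≤ C * (Real.sqrt P.card + 1) := by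
  refine ⟨8, by norm_num, fun o P ho hP => ?_⟩
  set n := P.card
  set k := ⌊√(n : ℝ)⌋₊ + 1
  obtain ⟨l, hperm, hsorted⟩ := List.exists_perm_pairwise_le_comp (stripKey k) P.toList
  have hl : ∀ p ∈ l, p ∈ unitSquare := fun p hp => hP p (by simpa using hperm.subset hp)
  have hlen : l.length = n := by simp [hperm.length_eq, n]
  have hsqrt_lt : √(n : ℝ) < k := by simpa [k] using Nat.lt_floor_add_one √(n : ℝ)
  have hk_le : (k : ℝ) ≤ √n + 1 := by simpa [k] using Nat.floor_le (Real.sqrt_nonneg n)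
  have hdiv : (n : ℝ) / k ≤ √n := by
    rw [div_le_iff₀ (by positivity)]
    nlinarith [Real.mul_self_sqrt n.cast_nonneg, Real.sqrt_nonneg n]
  calc optTourCost o P ≤ closedWalkLen o l := optTourCost_le_closedWalkLen o hperm
    _ ≤ walkLen l + 2 * 2 := closedWalkLen_le_walkLen_add (by norm_num) o
      fun y hy => dist_le_two_of_mem_unitSquare ho (hl y hy)
    _ ≤ 1 + 3 * k + n / k + 2 * 2 := by
      gcongr
      rw [← hlen]
      exact walkLen_le_of_pairwise_stripKey (Nat.succ_pos _) hl hsorted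
    _ ≤ 8 * (√n + 1) := by linarith [Real.sqrt_nonneg n]

end
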